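/- For every real number x, ∏_{γ∈Φ⁺} ⟨xω₂+(6−2x)(ω₀+ω₁), γ⟩ = 2³·3⁴ · x(x−3)²(x−6)(x+6)(x−12). -/

import Mathlib

open scoped InnerProductSpace

noncomputable section

namespace PasquierA1G2

abbrev W : Type := EuclideanSpace ℝ (Fin 5)

def α₀ : W := (WithLp.equiv 2 (Fin 5 → ℝ)).symm ![1, -1, 0, 0, 0]
def α₁ : W := (WithLp.equiv 2 (Fin 5 → ℝ)).symm ![0, 0, 1, -1, 0]
def α₂ : W := (WithLp.equiv 2 (Fin 5 → ℝ)).symm ![0, 0, -2, 1, 1]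

def ω₀ : W := (1 / 2 : ℝ) • α₀
def ω₁ : W := (2 : ℝ) • α₁ + α₂
def ω₂ : W := (3 : ℝ) • α₁ + (2 : ℝ) • α₂

def PhiPlus : List W :=
  [α₀, α₁, α₂, α₁ + α₂, (2 : ℝ) • α₁ + α₂, (3 : ℝ) • α₁ + α₂,
   (3 : ℝ) • α₁ + (2 : ℝ) • α₂]

def ρ : W := (1 / 2 : ℝ) • α₀ + (5 : ℝ) • α₁ + (3 : ℝ) • α₂

/-! The weight has coordinates `(6 - 2x, 6 - 2x, x)` in the fundamental weights, so by duality
`⟪ωᵢ, αⱼ⟫ = δᵢⱼ ‖αⱼ‖² / 2` it pairs with `α₀, α₁, α₂` to `6 - 2x, 6 - 2x, 3x`. Every positive root is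
a combination of simple roots, so each factor is linear in `x` and the product is a polynomial
identity. -/

lemma inner_equiv_symm_five (a₀ a₁ a₂ a₃ a₄ b₀ b₁ b₂ b₃ b₄ : ℝ) :
    ⟪(WithLp.equiv 2 (Fin 5 → ℝ)).symm ![a₀, a₁, a₂, a₃, a₄],
      (WithLp.equiv 2 (Fin 5 → ℝ)).symm ![b₀, b₁, b₂, b₃, b₄]⟫_ℝ =
      a₀ * b₀ + a₁ * b₁ + a₂ * b₂ + a₃ * b₃ + a₄ * b₄ := by
  simp only [PiLp.inner_apply, Fin.sum_univ_five, WithLp.equiv_symm_apply,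
    RCLike.inner_apply, conj_trivial, Matrix.cons_val]
  ring

lemma inner_α₀_α₀ : ⟪α₀, α₀⟫_ℝ = 2 := by
  rw [α₀, inner_equiv_symm_five]; norm_num

lemma inner_α₀_α₁ : ⟪α₀, α₁⟫_ℝ = 0 := by
  rw [α₀, α₁, inner_equiv_symm_five]; norm_num

lemma inner_α₀_α₂ : ⟪α₀, α₂⟫_ℝ = 0 := by
  rw [α₀, α₂, inner_equiv_symm_five]; norm_num

lemma inner_α₁_α₁ : ⟪α₁, α₁⟫_ℝ = 2 := by
  rw [α₁, inner_equiv_symm_five]; norm_num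

lemma inner_α₁_α₂ : ⟪α₁, α₂⟫_ℝ = -3 := by
  rw [α₁, α₂, inner_equiv_symm_five]; norm_num

lemma inner_α₂_α₂ : ⟪α₂, α₂⟫_ℝ = 6 := by
  rw [α₂, inner_equiv_symm_five]; norm_num

def weight (x : ℝ) : W := x • ω₂ + (6 - 2 * x) • (ω₀ + ω₁)

section Pairing

variable (x : ℝ)

lemma weight_eq :
    weight x = ((6 - 2 * x) / 2) • α₀ + (12 - x) • α₁ + (6 : ℝ) • α₂ := by
  simp only [weight, ω₀, ω₁, ω₂, smul_add, smul_smul]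
  module

lemma inner_weight_α₀ : ⟪weight x, α₀⟫_ℝ = 6 - 2 * x := by
  rw [weight_eq]
  simp only [inner_add_left, real_inner_smul_left, inner_α₀_α₀, real_inner_comm α₀ α₁,
    real_inner_comm α₀ α₂, inner_α₀_α₁, inner_α₀_α₂]
  ring

lemma inner_weight_α₁ : ⟪weight x, α₁⟫_ℝ = 6 - 2 * x := by
  rw [weight_eq]
  simp only [inner_add_left, real_inner_smul_left, inner_α₀_α₁, inner_α₁_α₁,
    real_inner_comm α₁ α₂, inner_α₁_α₂]
  ring

lemma inner_weight_α₂ : ⟪weight x, α₂⟫_ℝ = 3 * x := by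
  rw [weight_eq]
  simp only [inner_add_left, real_inner_smul_left, inner_α₀_α₂, inner_α₁_α₂, inner_α₂_α₂]
  ring

end Pairing

/-- ∏_{γ∈Φ⁺} ⟨xω₂+(6−2x)(ω₀+ω₁), γ⟩ = 2³·3⁴ · x(x−3)²(x−6)(x+6)(x−12). -/
theorem prod_numerators (x : ℝ) :
    (PhiPlus.map fun γ => ⟪x • ω₂ + (6 - 2 * x) • (ω₀ + ω₁), γ⟫_ℝ).prod
      = 2 ^ 3 * 3 ^ 4 * (x * (x - 3) ^ 2 * (x - 6) * (x + 6) * (x - 12)) := by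
  change (PhiPlus.map fun γ => ⟪weight x, γ⟫_ℝ).prod = _
  simp only [PhiPlus, List.map_cons, List.map_nil, List.prod_cons, List.prod_nil,
    inner_add_right, inner_smul_right, inner_weight_α₀, inner_weight_α₁, inner_weight_α₂]
  ring

end PasquierA1G2
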